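/- Let f : ℝ × ℝ^n → ℝ^n, g : ℝ × ℝ^n → ℝ^{n×m} and ψ : ℝ × ℝ^n → ℝ be infinitely differentiable. Let ρ ≥ 1 and suppose L_g L_f^i ψ(t,x) = 0 (as a row vector in ℝ^{1×m}) for all (t,x) ∈ ℝ × ℝ^n and all 0 ≤ i ≤ ρ − 2. Let u : I → ℝ^m be continuous on an interval I and let x : I → ℝ^n be differentiable with ẋ(t) = f(t,x(t)) + g(t,x(t))u(t) for all t ∈ I. Then the map t ↦ ψ(t,x(t)) is (ρ−1)-times continuously differentiable on I, its i-th derivative equals L_f^i ψ(t,x(t)) for every 0 ≤ i ≤ ρ − 1, and at every t ∈ I its ρ-th derivative exists and equals L_f^ρ ψ(t,x(t)) + L_g L_f^{ρ−1} ψ(t,x(t))·u(t). -/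

import Mathlib

noncomputable section

open Real MeasureTheory Finset

/-- One-step Lie derivative of a scalar function `ψ` along the time-varying vector field `f`:
`L_f ψ (t,x) = (∂ₓ ψ)(t,x) · f(t,x) + (∂ₜ ψ)(t,x)`, expressed as the total (Fréchet)
derivative of `ψ` in the direction `(1, f(t,x))`. -/
def lieF {n : ℕ} (f : ℝ × (Fin n → ℝ) → Fin n → ℝ) (ψ : ℝ × (Fin n → ℝ) → ℝ) :
    ℝ × (Fin n → ℝ) → ℝ :=
  fun p => fderiv ℝ ψ p (1, f p)

/-- Iterated Lie derivative `L_f^j ψ`, with `L_f^0 ψ = ψ`. -/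
def lieFIter {n : ℕ} (f : ℝ × (Fin n → ℝ) → Fin n → ℝ) (ψ : ℝ × (Fin n → ℝ) → ℝ)
    (j : ℕ) : ℝ × (Fin n → ℝ) → ℝ :=
  (lieF f)^[j] ψ

/-- Mixed Lie derivative `L_g ψ (t,x) = (∂ₓ ψ)(t,x) · g(t,x) ∈ ℝ^{1×m}` as a row vector;
the `i`-th component is the derivative of `ψ` in the (space) direction of the `i`-th
column of `g`. -/
def lieG {n m : ℕ} (g : ℝ × (Fin n → ℝ) → Fin n → Fin m → ℝ)
    (ψ : ℝ × (Fin n → ℝ) → ℝ) : ℝ × (Fin n → ℝ) → Fin m → ℝ :=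
  fun p i => fderiv ℝ ψ p (0, fun a => g p a i)

/-! Along a solution of `ẋ = f + g u` the chain rule gives
`d/dt χ(t, x(t)) = L_f χ(t, x(t)) + L_g χ(t, x(t)) · u(t)`. For `χ = L_f^j ψ` with `j ≤ ρ - 2` the
control term vanishes, so `L_f^j ψ(t, x(t))` is the derivative of `L_f^(j-1) ψ(t, x(t))` for
`j ≤ ρ - 1`; at the last step the control term survives. -/

section IteratedDerivatives

variable {𝕜 F : Type*} [NontriviallyNormedField 𝕜] [NormedAddCommGroup F] [NormedSpace 𝕜 F]
  {φ : ℕ → 𝕜 → F} {s : Set 𝕜} {k : ℕ}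

theorem contDiffOn_of_hasDerivAt_succ (hs : IsOpen s) (hcont : ContinuousOn (φ k) s)
    (hderiv : ∀ j < k, ∀ t ∈ s, HasDerivAt (φ j) (φ (j + 1) t) t) :
    ContDiffOn 𝕜 k (φ 0) s := by
  induction k generalizing φ with
  | zero => exact contDiffOn_zero.2 hcont
  | succ k ih =>
    have hshift : ContDiffOn 𝕜 k (φ 1) s :=
      ih (φ := fun j => φ (j + 1)) hcont fun j hj t ht => hderiv (j + 1) (by omega) t ht
    rw [Nat.cast_succ]
    refine (contDiffOn_succ_iff_deriv_of_isOpen hs).2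
      ⟨?_, fun h => absurd h (WithTop.natCast_ne_top k), ?_⟩
    · exact fun t ht => (hderiv 0 k.succ_pos t ht).differentiableAt.differentiableWithinAt
    · exact hshift.congr fun t ht => (hderiv 0 k.succ_pos t ht).deriv

theorem iteratedDerivWithin_eq_of_hasDerivAt_succ (hs : IsOpen s)
    (hderiv : ∀ j < k, ∀ t ∈ s, HasDerivAt (φ j) (φ (j + 1) t) t) :
    ∀ i ≤ k, ∀ t ∈ s, iteratedDerivWithin i (φ 0) s t = φ i t := by
  intro i
  induction i with
  | zero => simp
  | succ i ih =>
    intro hi t ht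
    have hloc : iteratedDerivWithin i (φ 0) s =ᶠ[nhds t] φ i :=
      Filter.eventually_of_mem (hs.mem_nhds ht) fun r hr => ih (by omega) r hr
    rw [iteratedDerivWithin_succ, derivWithin_of_isOpen hs ht, hloc.deriv_eq]
    exact (hderiv i (by omega) t ht).deriv

end IteratedDerivatives

variable {n m : ℕ} {f : ℝ × (Fin n → ℝ) → Fin n → ℝ} {χ : ℝ × (Fin n → ℝ) → ℝ}

theorem lieFIter_succ (ψ : ℝ × (Fin n → ℝ) → ℝ) (j : ℕ) :
    lieFIter f ψ (j + 1) = lieF f (lieFIter f ψ j) :=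
  Function.iterate_succ_apply' _ _ _

theorem ContDiff.lieF (hf : ContDiff ℝ (⊤ : ℕ∞) f) (hχ : ContDiff ℝ (⊤ : ℕ∞) χ) :
    ContDiff ℝ (⊤ : ℕ∞) (lieF f χ) :=
  (hχ.fderiv_right (by exact_mod_cast le_top)).clm_apply (contDiff_const.prodMk hf)

theorem ContDiff.lieFIter (hf : ContDiff ℝ (⊤ : ℕ∞) f) {ψ : ℝ × (Fin n → ℝ) → ℝ}
    (hψ : ContDiff ℝ (⊤ : ℕ∞) ψ) (j : ℕ) : ContDiff ℝ (⊤ : ℕ∞) (lieFIter f ψ j) := by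
  induction j with
  | zero => exact hψ
  | succ j ih => rw [lieFIter_succ]; exact hf.lieF ih

theorem hasDerivAt_comp_trajectory (g : ℝ × (Fin n → ℝ) → Fin n → Fin m → ℝ)
    {u : ℝ → Fin m → ℝ} {x : ℝ → Fin n → ℝ} {t : ℝ} (hχ : DifferentiableAt ℝ χ (t, x t))
    (hx : HasDerivAt x (fun a => f (t, x t) a + ∑ i, g (t, x t) a i * u t i) t) :
    HasDerivAt (fun s => χ (s, x s))
      (lieF f χ (t, x t) + ∑ i, lieG g χ (t, x t) i * u t i) t := by
  have hvel : ((1 : ℝ), fun a => f (t, x t) a + ∑ i, g (t, x t) a i * u t i)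
      = ((1 : ℝ), f (t, x t)) + ∑ i, u t i • ((0 : ℝ), fun a => g (t, x t) a i) := by
    ext a <;> simp [Prod.fst_sum, Prod.snd_sum, Finset.sum_apply, mul_comm]
  refine (hχ.hasFDerivAt.comp_hasDerivAt t ((hasDerivAt_id t).prodMk hx)).congr_deriv ?_
  rw [hvel, map_add, map_sum]
  simp only [map_smul, smul_eq_mul, lieF, lieG, mul_comm]

theorem lie_derivatives_along_trajectory_general
    {n m : ℕ} (f : ℝ × (Fin n → ℝ) → Fin n → ℝ)
    (g : ℝ × (Fin n → ℝ) → Fin n → Fin m → ℝ)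
    (ψ : ℝ × (Fin n → ℝ) → ℝ)
    (hf : ContDiff ℝ (⊤ : ℕ∞) f)
    (hψ : ContDiff ℝ (⊤ : ℕ∞) ψ)
    (ρ : ℕ) (hρ : 1 ≤ ρ)
    (hzero : ∀ i : ℕ, i + 2 ≤ ρ → ∀ p : ℝ × (Fin n → ℝ),
      lieG g (lieFIter f ψ i) p = 0)
    (I : Set ℝ) (hI : IsOpen I)
    (u : ℝ → Fin m → ℝ)
    (x : ℝ → Fin n → ℝ)
    (hx : ∀ t ∈ I, HasDerivAt x
      (fun a => f (t, x t) a + ∑ i, g (t, x t) a i * u t i) t) :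
    ContDiffOn ℝ ((ρ - 1 : ℕ) : ℕ∞) (fun s => ψ (s, x s)) I ∧
    (∀ i ≤ ρ - 1, ∀ t ∈ I,
      iteratedDerivWithin i (fun s => ψ (s, x s)) I t = lieFIter f ψ i (t, x t)) ∧
    (∀ t ∈ I, HasDerivAt (iteratedDerivWithin (ρ - 1) (fun s => ψ (s, x s)) I)
      (lieFIter f ψ ρ (t, x t) +
        ∑ i, lieG g (lieFIter f ψ (ρ - 1)) (t, x t) i * u t i) t) := by
  have hchain : ∀ j, ∀ t ∈ I, HasDerivAt (fun s => lieFIter f ψ j (s, x s))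
      (lieFIter f ψ (j + 1) (t, x t) + ∑ i, lieG g (lieFIter f ψ j) (t, x t) i * u t i) t :=
    fun j t ht => lieFIter_succ ψ j ▸ hasDerivAt_comp_trajectory g
      ((hf.lieFIter hψ j).differentiable (by simp) _) (hx t ht)
  have hstep : ∀ j < ρ - 1, ∀ t ∈ I, HasDerivAt (fun s => lieFIter f ψ j (s, x s))
      (lieFIter f ψ (j + 1) (t, x t)) t := fun j hj t ht => by
    simpa [hzero j (by omega)] using hchain j t ht
  have hiter := iteratedDerivWithin_eq_of_hasDerivAt_succ
    (φ := fun j s => lieFIter f ψ j (s, x s)) hI hstep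
  refine ⟨contDiffOn_of_hasDerivAt_succ hI ?_ hstep, hiter, fun t ht => ?_⟩
  · exact fun t ht => (hchain (ρ - 1) t ht).continuousAt.continuousWithinAt
  · obtain ⟨k, rfl⟩ : ∃ k, ρ = k + 1 := ⟨ρ - 1, by omega⟩
    refine (hchain k t ht).congr_of_eventuallyEq ?_
    filter_upwards [hI.mem_nhds ht] with s hs using hiter k (by omega) s hs

/-- **Derivatives of `ψ` along a trajectory of `ẋ = f + g·u`.**
If `L_g L_f^i ψ = 0` for `0 ≤ i ≤ ρ-2`, then `t ↦ ψ(t,x(t))` is `(ρ-1)`-times continuously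
differentiable on `I`, its `i`-th derivative is `L_f^i ψ(t,x(t))` for `0 ≤ i ≤ ρ-1`, and its
`ρ`-th derivative exists and equals `L_f^ρ ψ + (L_g L_f^{ρ-1} ψ)·u`. -/
theorem lie_derivatives_along_trajectory
    {n m : ℕ} (f : ℝ × (Fin n → ℝ) → Fin n → ℝ)
    (g : ℝ × (Fin n → ℝ) → Fin n → Fin m → ℝ)
    (ψ : ℝ × (Fin n → ℝ) → ℝ)
    (hf : ContDiff ℝ (⊤ : ℕ∞) f) (hg : ContDiff ℝ (⊤ : ℕ∞) g)
    (hψ : ContDiff ℝ (⊤ : ℕ∞) ψ)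
    (ρ : ℕ) (hρ : 1 ≤ ρ)
    (hzero : ∀ i : ℕ, i + 2 ≤ ρ → ∀ p : ℝ × (Fin n → ℝ),
      lieG g (lieFIter f ψ i) p = 0)
    (I : Set ℝ) (hI : IsOpen I) (hI' : I.OrdConnected)
    (u : ℝ → Fin m → ℝ) (hu : ContinuousOn u I)
    (x : ℝ → Fin n → ℝ)
    (hx : ∀ t ∈ I, HasDerivAt x
      (fun a => f (t, x t) a + ∑ i, g (t, x t) a i * u t i) t) :
    ContDiffOn ℝ ((ρ - 1 : ℕ) : ℕ∞) (fun s => ψ (s, x s)) I ∧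
    (∀ i ≤ ρ - 1, ∀ t ∈ I,
      iteratedDerivWithin i (fun s => ψ (s, x s)) I t = lieFIter f ψ i (t, x t)) ∧
    (∀ t ∈ I, HasDerivAt (iteratedDerivWithin (ρ - 1) (fun s => ψ (s, x s)) I)
      (lieFIter f ψ ρ (t, x t) +
        ∑ i, lieG g (lieFIter f ψ (ρ - 1)) (t, x t) i * u t i) t) :=
  lie_derivatives_along_trajectory_general f g ψ hf hψ ρ hρ hzero I hI u x hx

end
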